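/- arXiv:1210.4137 — 5 statements merged into one kernel-verified Lean document; each statement's English description precedes it below -/
import Mathlib

section
/- In any group containing elements s and x satisfying x^{-1}sx = s^2, for every positive integer k the element s^k can be written as a product of at most 3·⌊log₂ k⌋ + 1 letters from {s, s^{-1}, x, x^{-1}}. Consequently, in the group ⟨s,x | x^{-1}sx = s^2⟩ generated by {s,x}, the word length of s^k is at most 3·⌊log₂ k⌋ + 1. -/
/-- The word length of `g` with respect to the generating set `X` (letters from `X ∪ X⁻¹`). -/
noncomputable def wordLength {G : Type*} [Group G] (X : Set G) (g : G) : ℕ :=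
  sInf {n : ℕ | ∃ l : List G, l.length = n ∧ (∀ x ∈ l, x ∈ X ∨ x⁻¹ ∈ X) ∧ l.prod = g}

/-- Generators of the group `⟨s,x ∣ x⁻¹sx = s²⟩`. -/
inductive SXGen | s | x
  deriving DecidableEq

/-- The single relator `x⁻¹ s x (s²)⁻¹` of `⟨s,x ∣ x⁻¹sx = s²⟩`. -/
def sxRels : Set (FreeGroup SXGen) :=
  {(FreeGroup.of SXGen.x)⁻¹ * FreeGroup.of SXGen.s * FreeGroup.of SXGen.x *
    (FreeGroup.of SXGen.s ^ 2)⁻¹}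

lemma main_aux {G : Type*} [Group G] (s x : G) (h : x⁻¹ * s * x = s ^ 2) :
    ∀ k : ℕ, 1 ≤ k → ∃ l : List G, l.length ≤ 3 * Nat.log 2 k + 1 ∧
      (∀ g ∈ l, g ∈ ({s, s⁻¹, x, x⁻¹} : Set G)) ∧ l.prod = s ^ k := by
  intro k
  induction k using Nat.strong_induction_on with
  | _ k ih =>
    intro hk
    rcases eq_or_lt_of_le hk with h1 | h2
    · refine ⟨[s], ?_, ?_, ?_⟩
      · simp
      · intro g hg; simp at hg; simp [hg]
      · simp [← h1]
    · -- k ≥ 2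
      have hq1 : 1 ≤ k / 2 := Nat.one_le_div_iff (by norm_num) |>.2 h2
      have hqk : k / 2 < k := Nat.div_lt_self (by omega) (by norm_num)
      obtain ⟨lq, hlen, hmem, hprod⟩ := ih (k / 2) hqk hq1
      have hconj : x⁻¹ * s ^ (k / 2) * x = s ^ (2 * (k / 2)) := by
        have := conj_pow (i := k / 2) (a := x⁻¹) (b := s)
        rw [inv_inv] at this
        rw [← this, h, ← pow_mul]
      have hlog : Nat.log 2 k = Nat.log 2 (k / 2) + 1 := by
        have := Nat.log_div_base 2 k
        have hpos : 1 ≤ Nat.log 2 k := Nat.one_le_iff_ne_zero.2 (by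
          have := Nat.log_pos (b := 2) (by norm_num) h2
          omega)
        omega
      refine ⟨(if k % 2 = 1 then [s] else []) ++ [x⁻¹] ++ lq ++ [x], ?_, ?_, ?_⟩
      · simp only [List.length_append, List.length_cons, List.length_nil]
        have : (if k % 2 = 1 then [s] else []).length ≤ 1 := by split <;> simp
        rw [hlog]; omega
      · intro g hg
        simp only [List.mem_append, List.mem_singleton] at hg
        rcases hg with ((hg | hg) | hg) | hg
        · split at hg <;> simp at hg; simp [hg]
        · simp [hg]
        · exact hmem g hg
        · simp [hg]
      · rw [List.prod_append, List.prod_append, List.prod_append, hprod]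
        simp only [List.prod_cons, List.prod_nil, mul_one]
        have hr : (if k % 2 = 1 then [s] else []).prod = s ^ (k % 2) := by
          rcases Nat.mod_two_eq_zero_or_one k with hm | hm <;> simp [hm]
        simp only [mul_assoc] at hconj ⊢
        rw [hr, hconj, ← pow_add]
        congr 1
        omega

theorem s_pow_short :
    (∀ (G : Type) [Group G] (s x : G), x⁻¹ * s * x = s ^ 2 →
      ∀ k : ℕ, 1 ≤ k → ∃ l : List G, l.length ≤ 3 * Nat.log 2 k + 1 ∧
        (∀ g ∈ l, g ∈ ({s, s⁻¹, x, x⁻¹} : Set G)) ∧ l.prod = s ^ k) ∧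
    (∀ k : ℕ, 1 ≤ k →
      wordLength ({PresentedGroup.of SXGen.s, PresentedGroup.of SXGen.x} :
          Set (PresentedGroup sxRels))
        (PresentedGroup.of (rels := sxRels) SXGen.s ^ k) ≤ 3 * Nat.log 2 k + 1) := by
  constructor
  · intro G _ s x h k hk; exact main_aux s x h k hk
  · intro k hk
    set S : PresentedGroup sxRels := PresentedGroup.of SXGen.s
    set X : PresentedGroup sxRels := PresentedGroup.of SXGen.x
    have hrel : X⁻¹ * S * X = S ^ 2 := by
      have hmem : ((FreeGroup.of SXGen.x)⁻¹ * FreeGroup.of SXGen.s * FreeGroup.of SXGen.x *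
          (FreeGroup.of SXGen.s ^ 2)⁻¹) ∈ Subgroup.normalClosure sxRels :=
        Subgroup.subset_normalClosure rfl
      have h1 : (PresentedGroup.mk sxRels) ((FreeGroup.of SXGen.x)⁻¹ * FreeGroup.of SXGen.s *
          FreeGroup.of SXGen.x * (FreeGroup.of SXGen.s ^ 2)⁻¹) = 1 :=
        (QuotientGroup.eq_one_iff _).2 hmem
      simp only [map_mul, map_inv, map_pow] at h1
      have : X⁻¹ * S * X * (S ^ 2)⁻¹ = 1 := h1
      exact mul_inv_eq_one.mp this
    obtain ⟨l, hlen, hmem, hprod⟩ := main_aux S X hrel k hk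
    refine le_trans (Nat.sInf_le ⟨l, rfl, ?_, hprod⟩) hlen
    intro g hg
    rcases hmem g hg with h | h | h | h
    · left; left; exact h
    · right; subst h; simp
    · left; right; exact h
    · right; subst h; simp
end

section
/- In the group H = ⟨a,s,t,x | t^{-1}at = a^2, s^{-1}as = a^2, x^{-1}sx = s^2⟩ with generating set {a,s,t,x}, for every positive integer k the word-metric distance between t^k and (at)^k is at most 6·⌊log₂(k+1)⌋ + 5. -/
/-- Generators of `H = ⟨a,s,t,x ∣ t⁻¹at = a², s⁻¹as = a², x⁻¹sx = s²⟩`. -/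
inductive HGen | a | s | t | x
  deriving DecidableEq

/-- The relators of `H`. -/
def hRels : Set (FreeGroup HGen) :=
  { (FreeGroup.of HGen.t)⁻¹ * FreeGroup.of HGen.a * FreeGroup.of HGen.t *
      (FreeGroup.of HGen.a ^ 2)⁻¹,
    (FreeGroup.of HGen.s)⁻¹ * FreeGroup.of HGen.a * FreeGroup.of HGen.s *
      (FreeGroup.of HGen.a ^ 2)⁻¹,
    (FreeGroup.of HGen.x)⁻¹ * FreeGroup.of HGen.s * FreeGroup.of HGen.x *
      (FreeGroup.of HGen.s ^ 2)⁻¹ }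

/-- The group `H`. -/
abbrev HGrp := PresentedGroup hRels

/-- The images of the four generators in `H`. -/
def ha : HGrp := PresentedGroup.of HGen.a
def hs : HGrp := PresentedGroup.of HGen.s
def ht : HGrp := PresentedGroup.of HGen.t
def hx : HGrp := PresentedGroup.of HGen.x

/-- The generating set `{a,s,t,x}` of `H`. -/
def hGenSet : Set HGrp := {ha, hs, ht, hx}

lemma wordLength_le {G : Type*} [Group G] (X : Set G) (g : G) (l : List G)
    (h1 : ∀ x ∈ l, x ∈ X ∨ x⁻¹ ∈ X) (h2 : l.prod = g) : wordLength X g ≤ l.length :=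
  Nat.sInf_le ⟨l, rfl, h1, h2⟩

lemma rel_one {r : FreeGroup HGen} (h : r ∈ hRels) : PresentedGroup.mk hRels r = 1 :=
  (QuotientGroup.eq_one_iff r).mpr (Subgroup.subset_normalClosure h)

lemma rel_t : ht⁻¹ * ha * ht = ha ^ 2 := by
  have h := rel_one (show _ ∈ hRels from Or.inl rfl)
  simp only [map_mul, map_inv, map_pow] at h
  have : (PresentedGroup.mk hRels (FreeGroup.of HGen.t))⁻¹ *
      PresentedGroup.mk hRels (FreeGroup.of HGen.a) * PresentedGroup.mk hRels (FreeGroup.of HGen.t)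
      * ((PresentedGroup.mk hRels (FreeGroup.of HGen.a)) ^ 2)⁻¹ = 1 := h
  have := mul_eq_one_iff_eq_inv.mp this
  simpa [ha, ht, PresentedGroup.of] using this

lemma rel_s : hs⁻¹ * ha * hs = ha ^ 2 := by
  have h := rel_one (show _ ∈ hRels from Or.inr (Or.inl rfl))
  simp only [map_mul, map_inv, map_pow] at h
  have : (PresentedGroup.mk hRels (FreeGroup.of HGen.s))⁻¹ *
      PresentedGroup.mk hRels (FreeGroup.of HGen.a) * PresentedGroup.mk hRels (FreeGroup.of HGen.s)
      * ((PresentedGroup.mk hRels (FreeGroup.of HGen.a)) ^ 2)⁻¹ = 1 := h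
  have := mul_eq_one_iff_eq_inv.mp this
  simpa [ha, hs, PresentedGroup.of] using this

lemma rel_x : hx⁻¹ * hs * hx = hs ^ 2 := by
  have h := rel_one (show _ ∈ hRels from Or.inr (Or.inr rfl))
  simp only [map_mul, map_inv, map_pow] at h
  have : (PresentedGroup.mk hRels (FreeGroup.of HGen.x))⁻¹ *
      PresentedGroup.mk hRels (FreeGroup.of HGen.s) * PresentedGroup.mk hRels (FreeGroup.of HGen.x)
      * ((PresentedGroup.mk hRels (FreeGroup.of HGen.s)) ^ 2)⁻¹ = 1 := h
  have := mul_eq_one_iff_eq_inv.mp this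
  simpa [hs, hx, PresentedGroup.of] using this

/-- From `u⁻¹ a u = a²` we get `u⁻¹ aⁿ u = a^(2n)`. -/
lemma conj_pow_two {G : Type*} [Group G] {u a : G} (h : u⁻¹ * a * u = a ^ 2) (n : ℕ) :
    u⁻¹ * a ^ n * u = a ^ (2 * n) := by
  have key : u⁻¹ * a ^ n * u = (u⁻¹ * a * u) ^ n := by
    induction n with
    | zero => simp
    | succ m ih =>
      rw [pow_succ, pow_succ, ← ih]
      group
  rw [key, h, ← pow_mul, Nat.mul_comm]

/-- From `u⁻¹ a u = a²` we get `u⁻ⁿ a^m uⁿ = a^(2ⁿ m)`. -/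
lemma conj_pow_iter {G : Type*} [Group G] {u a : G} (h : u⁻¹ * a * u = a ^ 2) (n m : ℕ) :
    (u ^ n)⁻¹ * a ^ m * u ^ n = a ^ (2 ^ n * m) := by
  induction n with
  | zero => simp
  | succ j ih =>
    have : (u ^ (j + 1))⁻¹ * a ^ m * u ^ (j + 1)
        = u⁻¹ * ((u ^ j)⁻¹ * a ^ m * u ^ j) * u := by
      rw [pow_succ]; group
    rw [this, ih, conj_pow_two h]
    congr 1
    ring

lemma at_pow (k : ℕ) : (ha * ht) ^ k = ht ^ k * ha ^ (2 ^ (k + 1) - 2) := by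
  induction k with
  | zero => simp
  | succ j ih =>
    have h1 : ha ^ (2 ^ (j + 1) - 2) * ha = ha ^ (2 ^ (j + 1) - 1) := by
      rw [← pow_succ]
      congr 1
      have : (2:ℕ) ≤ 2 ^ (j + 1) := by
        have := Nat.one_le_two_pow (n := j)
        calc (2:ℕ) = 2 * 1 := rfl
          _ ≤ 2 * 2 ^ j := by omega
          _ = 2 ^ (j + 1) := (pow_succ' 2 j).symm
      omega
    have h2 : ha ^ (2 ^ (j + 1) - 1) * ht = ht * ha ^ (2 * (2 ^ (j + 1) - 1)) := by
      have := conj_pow_two rel_t (2 ^ (j + 1) - 1)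
      calc ha ^ (2 ^ (j + 1) - 1) * ht
          = ht * (ht⁻¹ * ha ^ (2 ^ (j + 1) - 1) * ht) := by group
        _ = ht * ha ^ (2 * (2 ^ (j + 1) - 1)) := by rw [this]
    have h3 : 2 * (2 ^ (j + 1) - 1) = 2 ^ (j + 2) - 2 := by
      have : (1:ℕ) ≤ 2 ^ (j + 1) := Nat.one_le_two_pow
      have : 2 ^ (j + 2) = 2 * 2 ^ (j + 1) := by rw [pow_succ]; ring
      omega
    calc (ha * ht) ^ (j + 1) = (ha * ht) ^ j * (ha * ht) := pow_succ _ _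
      _ = ht ^ j * (ha ^ (2 ^ (j + 1) - 2) * ha) * ht := by rw [ih]; group
      _ = ht ^ j * (ha ^ (2 ^ (j + 1) - 1) * ht) := by rw [h1]; group
      _ = ht ^ j * (ht * ha ^ (2 * (2 ^ (j + 1) - 1))) := by rw [h2]
      _ = ht ^ (j + 1) * ha ^ (2 ^ (j + 2) - 2) := by rw [h3, pow_succ]; group

/-- Word for `s^n` of length `≤ 3 log₂ n + 1`. -/
def sWord : ℕ → List HGrp
  | 0 => []
  | 1 => [hs]
  | (n + 2) => [hx⁻¹] ++ sWord ((n + 2) / 2) ++ [hx]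
      ++ (if (n + 2) % 2 = 1 then [hs] else [])
  decreasing_by exact Nat.div_lt_self (by omega) (by omega)

lemma sWord_spec (n : ℕ) : (sWord n).prod = hs ^ n ∧
    (∀ g ∈ sWord n, g ∈ hGenSet ∨ g⁻¹ ∈ hGenSet) ∧
    (1 ≤ n → (sWord n).length ≤ 3 * Nat.log 2 n + 1) := by
  induction n using Nat.strong_induction_on with
  | _ n ih =>
    match n with
    | 0 => simp [sWord]
    | 1 =>
      refine ⟨by simp [sWord], ?_, by simp [sWord]⟩
      intro g hg
      simp [sWord] at hg
      subst hg
      exact Or.inl (by simp [hGenSet])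
    | (m + 2) =>
      set n := m + 2 with hn
      have hdiv : n / 2 < n := Nat.div_lt_self (by omega) (by omega)
      obtain ⟨hp, hmem, hlen⟩ := ih (n / 2) hdiv
      have hxmem : hx ∈ hGenSet := by simp [hGenSet]
      have hsmem : hs ∈ hGenSet := by simp [hGenSet]
      have hunfold : sWord n = [hx⁻¹] ++ sWord (n / 2) ++ [hx]
          ++ (if n % 2 = 1 then [hs] else []) := by
        rw [hn, sWord]
      refine ⟨?_, ?_, ?_⟩
      · rw [hunfold]
        have key : hx⁻¹ * hs ^ (n / 2) * hx = hs ^ (2 * (n / 2)) := conj_pow_two rel_x (n / 2)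
        rcases Nat.even_or_odd n with he | ho
        · have h2 : n % 2 = 0 := Nat.even_iff.mp he
          have : 2 * (n / 2) = n := by omega
          simp [h2, hp, ← mul_assoc, key, this]
        · have h2 : n % 2 = 1 := Nat.odd_iff.mp ho
          have hnn : 2 * (n / 2) + 1 = n := by omega
          simp only [h2, if_pos, List.prod_append, List.prod_cons, List.prod_nil,
            mul_one, one_mul, hp, List.prod_singleton]
          rw [key, ← pow_succ, hnn]
      · intro g hg
        rw [hunfold] at hg
        simp only [List.mem_append, List.mem_singleton] at hg
        rcases hg with ((hg | hg) | hg) | hg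
        · subst hg; exact Or.inr (by simpa using hxmem)
        · exact hmem g hg
        · subst hg; exact Or.inl hxmem
        · rcases Nat.even_or_odd n with he | ho
          · simp [Nat.even_iff.mp he] at hg
          · simp [Nat.odd_iff.mp ho] at hg
            subst hg; exact Or.inl hsmem
      · intro _
        have hlog : Nat.log 2 (n / 2) = Nat.log 2 n - 1 := Nat.log_div_base 2 n
        have hlog1 : 1 ≤ Nat.log 2 n := Nat.log_pos (by omega) (by omega)
        have hl := hlen (by omega)
        rw [hunfold]
        have hlen2 : (if n % 2 = 1 then [hs] else ([] : List HGrp)).length ≤ 1 := by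
          split <;> simp
        simp only [List.length_append, List.length_singleton]
        omega

theorem dist_t_pow_at_pow :
    ∀ k : ℕ, 1 ≤ k →
      wordLength hGenSet ((ht ^ k)⁻¹ * (ha * ht) ^ k) ≤ 6 * Nat.log 2 (k + 1) + 5 := by
  intro k hk
  obtain ⟨hp, hmem, hlen⟩ := sWord_spec (k + 1)
  set W := sWord (k + 1)
  set L : List HGrp := (W.map (·⁻¹)).reverse ++ [ha] ++ W ++ [ha⁻¹, ha⁻¹] with hL
  have hamem : ha ∈ hGenSet := by simp [hGenSet]
  have hLmem : ∀ g ∈ L, g ∈ hGenSet ∨ g⁻¹ ∈ hGenSet := by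
    intro g hg
    simp only [hL, List.mem_append, List.mem_reverse, List.mem_map, List.mem_singleton,
      List.mem_cons, List.not_mem_nil, or_false] at hg
    rcases hg with ((⟨y, hy, rfl⟩ | rfl) | hg) | (rfl | rfl)
    · rcases hmem y hy with h | h
      · exact Or.inr (by simpa using h)
      · exact Or.inl (by simpa using h)
    · exact Or.inl hamem
    · exact hmem g hg
    · exact Or.inr (by simpa using hamem)
    · exact Or.inr (by simpa using hamem)
  have hLprod : L.prod = (ht ^ k)⁻¹ * (ha * ht) ^ k := by
    have hinv : ((W.map (·⁻¹)).reverse).prod = (W.prod)⁻¹ := (List.prod_inv_reverse W).symm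
    have h1 : L.prod = (hs ^ (k + 1))⁻¹ * ha * hs ^ (k + 1) * (ha⁻¹ * ha⁻¹) := by
      simp only [hL, List.prod_append, List.prod_cons, List.prod_nil, hinv, hp,
        List.prod_singleton, mul_one]
    have h2 : (hs ^ (k + 1))⁻¹ * ha * hs ^ (k + 1) = ha ^ (2 ^ (k + 1)) := by
      have := conj_pow_iter rel_s (k + 1) 1
      simpa using this
    have h3 : (2:ℕ) ≤ 2 ^ (k + 1) := by
      calc (2:ℕ) = 2 ^ 1 := rfl
        _ ≤ 2 ^ (k + 1) := Nat.pow_le_pow_right (by omega) (by omega)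
    have h5 : ha ^ (2 ^ (k + 1)) * (ha⁻¹ * ha⁻¹) = ha ^ (2 ^ (k + 1) - 2) := by
      conv_lhs => rw [show (2:ℕ) ^ (k + 1) = (2 ^ (k + 1) - 2) + 2 from by omega]
      rw [pow_add]
      group
    rw [h1, h2, h5, at_pow k]
    group
  have hLlen : L.length ≤ 6 * Nat.log 2 (k + 1) + 5 := by
    have := hlen (by omega)
    simp only [hL, List.length_append, List.length_reverse, List.length_map,
      List.length_singleton, List.length_cons, List.length_nil]
    omega
  calc wordLength hGenSet ((ht ^ k)⁻¹ * (ha * ht) ^ k) ≤ L.length :=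
        wordLength_le _ _ L hLmem hLprod
    _ ≤ 6 * Nat.log 2 (k + 1) + 5 := hLlen
end

section
/- In the Baumslag–Solitar group BS(1,2) = ⟨a,t | t^{-1}at = a^2⟩, for positive integers l and l', the element t^l a^{-(2^{l'+1}-2)} t^{-l'} equals t^{l-1} a^{-(2^{l'}-1)} t^{-(l'-1)}, and since 2^{l'}-1 is odd (for l' ≥ 1), every word in {a^{±1}, t^{±1}} representing this element contains at least (l-1)+(l'-1) occurrences of t^{±1}. -/
/-- Generators of the Baumslag–Solitar group `BS(1,2) = ⟨a,t ∣ t⁻¹at = a²⟩`. -/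
inductive BSGen | a | t
  deriving DecidableEq

/-- The single relator `t⁻¹ a t (a²)⁻¹` of `BS(1,2)`. -/
def bsRels : Set (FreeGroup BSGen) :=
  {(FreeGroup.of BSGen.t)⁻¹ * FreeGroup.of BSGen.a * FreeGroup.of BSGen.t *
    (FreeGroup.of BSGen.a ^ 2)⁻¹}

/-- `a` in `BS(1,2)`. -/
def A : PresentedGroup bsRels := PresentedGroup.of BSGen.a
/-- `t` in `BS(1,2)`. -/
def T : PresentedGroup bsRels := PresentedGroup.of BSGen.t

/-!
Let `BS(1,2)` act on `ℚ` by `a : x ↦ x + 1` and `t : x ↦ x / 2`. A word with `p` letters `t` and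
`q` letters `t⁻¹` acts as `x ↦ (2^q x + z) / 2^p` for some integer `z`, while `t^m a^c t^(-n)` acts
as `x ↦ (2^n x + c) / 2^m`. Comparing slopes gives `q - p = n - m`, and comparing values at `0`
gives `m ≤ p` when `c` is odd, because then `c / 2^m` is in lowest terms. Hence `p + q ≥ m + n`.
The identity `a^(-(2^(l'+1) - 2)) = t⁻¹ a^(-(2^l' - 1)) t` puts the element in this form with
`m = l - 1`, `n = l' - 1` and `c = -(2^l' - 1)` odd.
-/

lemma T_inv_mul_A_mul_T : T⁻¹ * A * T = A ^ 2 := by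
  have h := PresentedGroup.one_of_mem (rels := bsRels) (Set.mem_singleton _)
  simp only [map_mul, map_inv, map_pow] at h
  exact mul_inv_eq_one.mp h

lemma T_inv_mul_A_zpow_mul_T (k : ℤ) : T⁻¹ * A ^ k * T = A ^ (2 * k) := by
  rw [zpow_mul, zpow_ofNat, ← T_inv_mul_A_mul_T]
  simpa using (conj_zpow (a := T⁻¹) (b := A) (i := k)).symm

def bsGenAction : BSGen → Equiv.Perm ℚ
  | .a => Equiv.addRight 1
  | .t => Equiv.divRight₀ 2 two_ne_zero

lemma lift_bsGenAction_eq_one_of_mem : ∀ r ∈ bsRels, FreeGroup.lift bsGenAction r = 1 := by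
  rintro r rfl
  ext x
  simp [bsGenAction, add_mul]

def bsAction : PresentedGroup bsRels →* Equiv.Perm ℚ :=
  PresentedGroup.toGroup lift_bsGenAction_eq_one_of_mem

lemma bsAction_T (x : ℚ) : bsAction T x = x / 2 := by
  simp [bsAction, T, bsGenAction]

lemma bsAction_A (x : ℚ) : bsAction A x = x + 1 := by
  simp [bsAction, A, bsGenAction]

lemma bsAction_T_inv (x : ℚ) : bsAction T⁻¹ x = 2 * x := by
  rw [map_inv, Equiv.Perm.inv_eq_iff_eq, bsAction_T, mul_div_cancel_left₀ x two_ne_zero]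

lemma bsAction_A_inv (x : ℚ) : bsAction A⁻¹ x = x - 1 := by
  rw [map_inv, Equiv.Perm.inv_eq_iff_eq, bsAction_A, sub_add_cancel]

lemma bsAction_T_zpow (k : ℤ) (x : ℚ) : bsAction (T ^ k) x = x / 2 ^ k := by
  induction k using Int.induction_on generalizing x with
  | zero => simp
  | succ k ih =>
    rw [zpow_add_one, map_mul, Equiv.Perm.mul_apply, bsAction_T, ih, zpow_add_one₀ two_ne_zero]
    ring
  | pred k ih =>
    rw [zpow_sub_one, map_mul, Equiv.Perm.mul_apply, bsAction_T_inv, ih,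
      zpow_sub_one₀ two_ne_zero]
    ring

lemma bsAction_A_zpow (k : ℤ) (x : ℚ) : bsAction (A ^ k) x = x + k := by
  induction k using Int.induction_on generalizing x with
  | zero => simp
  | succ k ih =>
    rw [zpow_add_one, map_mul, Equiv.Perm.mul_apply, bsAction_A, ih]
    push_cast
    ring
  | pred k ih =>
    rw [zpow_sub_one, map_mul, Equiv.Perm.mul_apply, bsAction_A_inv, ih]
    push_cast
    ring

lemma exists_bsAction_mk_eq (w : List (BSGen × Bool)) :
    ∃ z : ℤ, ∀ x : ℚ, bsAction (PresentedGroup.mk bsRels (FreeGroup.mk w)) x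
      = (2 ^ w.count (.t, false) * x + z) / 2 ^ w.count (.t, true) := by
  induction w with
  | nil => exact ⟨0, fun x => by simp [← FreeGroup.one_eq_mk]⟩
  | cons gb w ih =>
    obtain ⟨z, hz⟩ := ih
    obtain ⟨_ | _, _ | _⟩ := gb
    · refine ⟨z - 2 ^ w.count (.t, true), fun x => ?_⟩
      change bsAction (A⁻¹ * PresentedGroup.mk bsRels (FreeGroup.mk w)) x = _
      rw [map_mul, Equiv.Perm.mul_apply, bsAction_A_inv, hz,
        List.count_cons_of_ne (by decide), List.count_cons_of_ne (by decide)]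
      push_cast
      field_simp
      ring
    · refine ⟨z + 2 ^ w.count (.t, true), fun x => ?_⟩
      change bsAction (A * PresentedGroup.mk bsRels (FreeGroup.mk w)) x = _
      rw [map_mul, Equiv.Perm.mul_apply, bsAction_A, hz,
        List.count_cons_of_ne (by decide), List.count_cons_of_ne (by decide)]
      push_cast
      field_simp
      ring
    · refine ⟨2 * z, fun x => ?_⟩
      change bsAction (T⁻¹ * PresentedGroup.mk bsRels (FreeGroup.mk w)) x = _
      rw [map_mul, Equiv.Perm.mul_apply, bsAction_T_inv, hz,
        List.count_cons_self, List.count_cons_of_ne (by decide)]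
      push_cast
      field_simp
      ring
    · refine ⟨z, fun x => ?_⟩
      change bsAction (T * PresentedGroup.mk bsRels (FreeGroup.mk w)) x = _
      rw [map_mul, Equiv.Perm.mul_apply, bsAction_T, hz,
        List.count_cons_self, List.count_cons_of_ne (by decide)]
      field_simp
      ring

lemma bsAction_T_zpow_mul_A_zpow_mul_T_zpow (m n : ℕ) (c : ℤ) (x : ℚ) :
    bsAction (T ^ (m : ℤ) * A ^ c * T ^ (-(n : ℤ))) x = (2 ^ n * x + c) / 2 ^ m := by
  rw [map_mul, map_mul, Equiv.Perm.mul_apply, Equiv.Perm.mul_apply, bsAction_T_zpow,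
    bsAction_A_zpow, bsAction_T_zpow, zpow_neg, zpow_natCast, zpow_natCast, div_inv_eq_mul,
    mul_comm x]

lemma le_of_intCast_div_two_pow_eq {z c : ℤ} {p m : ℕ} (hc : Odd c)
    (h : (z : ℚ) / 2 ^ p = c / 2 ^ m) : m ≤ p := by
  have hZ : z * 2 ^ m = c * 2 ^ p := by
    rw [div_eq_div_iff (by positivity) (by positivity)] at h
    exact_mod_cast h
  by_contra! hpm
  obtain ⟨k, rfl⟩ := Nat.exists_eq_add_of_lt hpm
  have hc2 : c = 2 * (z * 2 ^ k) := by
    apply mul_right_cancel₀ (pow_ne_zero p two_ne_zero)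
    rw [← hZ]
    ring
  exact Int.not_even_iff_odd.mpr hc ⟨z * 2 ^ k, by rw [hc2, two_mul]⟩

lemma length_filter_t_eq_count_add_count (w : List (BSGen × Bool)) :
    (w.filter fun p => p.1 = BSGen.t).length = w.count (.t, true) + w.count (.t, false) := by
  induction w with
  | nil => rfl
  | cons x w ih =>
    obtain ⟨_ | _, _ | _⟩ := x <;> simp [ih] <;> omega

lemma add_le_length_filter_t_of_mk_eq {m n : ℕ} {c : ℤ} (hc : Odd c) {w : List (BSGen × Bool)}
    (hw : PresentedGroup.mk bsRels (FreeGroup.mk w) = T ^ (m : ℤ) * A ^ c * T ^ (-(n : ℤ))) :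
    m + n ≤ (w.filter fun p => p.1 = BSGen.t).length := by
  obtain ⟨z, hz⟩ := exists_bsAction_mk_eq w
  set p := w.count (.t, true)
  set q := w.count (.t, false)
  have hval (x : ℚ) : (2 ^ q * x + z) / 2 ^ p = (2 ^ n * x + c) / 2 ^ m := by
    rw [← hz, hw, bsAction_T_zpow_mul_A_zpow_mul_T_zpow]
  have hmp : m ≤ p := le_of_intCast_div_two_pow_eq hc (by simpa using hval 0)
  have hslope : q + m = n + p := by
    have h0 := hval 0
    have h1 := hval 1
    have hpow : (2 : ℚ) ^ (q + m) = 2 ^ (n + p) := by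
      field_simp at h0 h1
      rw [pow_add, pow_add]
      linear_combination h1 - h0
    exact Nat.pow_right_injective le_rfl (by exact_mod_cast hpow)
  rw [length_filter_t_eq_count_add_count]
  omega

theorem t_letters_lower_bound (l l' : ℕ) (hl : 1 ≤ l) (hl' : 1 ≤ l') :
    T ^ (l : ℤ) * A ^ (-((2 : ℤ) ^ (l' + 1) - 2)) * T ^ (-(l' : ℤ))
      = T ^ ((l : ℤ) - 1) * A ^ (-((2 : ℤ) ^ l' - 1)) * T ^ (-((l' : ℤ) - 1)) ∧
    ∀ w : List (BSGen × Bool),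
      PresentedGroup.mk bsRels (FreeGroup.mk w)
          = T ^ (l : ℤ) * A ^ (-((2 : ℤ) ^ (l' + 1) - 2)) * T ^ (-(l' : ℤ)) →
        (l - 1) + (l' - 1) ≤ (w.filter (fun p => p.1 = BSGen.t)).length := by
  have hidentity : T ^ (l : ℤ) * A ^ (-((2 : ℤ) ^ (l' + 1) - 2)) * T ^ (-(l' : ℤ))
      = T ^ ((l : ℤ) - 1) * A ^ (-((2 : ℤ) ^ l' - 1)) * T ^ (-((l' : ℤ) - 1)) := by
    have hexp : -((2 : ℤ) ^ (l' + 1) - 2) = 2 * -((2 : ℤ) ^ l' - 1) := by ring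
    rw [hexp, ← T_inv_mul_A_zpow_mul_T]
    group
  refine ⟨hidentity, fun w hw => ?_⟩
  have hodd : Odd (-((2 : ℤ) ^ l' - 1)) :=
    ((even_two.pow_of_ne_zero (by omega)).sub_odd odd_one).neg
  apply add_le_length_filter_t_of_mk_eq hodd
  rw [hw, hidentity, Nat.cast_sub hl, Nat.cast_sub hl', Nat.cast_one]
end

section
/- Let G be a group generated by a finite set X and let g ∈ G have infinite order. Then s(g^∞, g^{-∞}) ≥ 1/2, and hence t(g^∞, g^{-∞}) = √(s(g^∞,g^{-∞})) ≥ 1/√2. -/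
section aux
variable {G : Type*} [Group G] (X : Set G)

lemma wordLength_le_of_witness {g : G} {l : List G}
    (hl : ∀ x ∈ l, x ∈ X ∨ x⁻¹ ∈ X) (hp : l.prod = g) :
    wordLength X g ≤ l.length :=
  Nat.sInf_le ⟨l, rfl, hl, hp⟩

lemma exists_witness (hgen : Subgroup.closure X = ⊤) (g : G) :
    ∃ l : List G, l.length = wordLength X g ∧ (∀ x ∈ l, x ∈ X ∨ x⁻¹ ∈ X) ∧ l.prod = g := by
  have hg : g ∈ (Subgroup.closure X).toSubmonoid := by
    rw [hgen]; exact Subgroup.mem_top g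
  rw [Subgroup.closure_toSubmonoid] at hg
  obtain ⟨l, hl, hp⟩ := Submonoid.exists_list_of_mem_closure hg
  have hl' : ∀ x ∈ l, x ∈ X ∨ x⁻¹ ∈ X := by
    intro x hx
    rcases hl x hx with h | h
    · exact Or.inl h
    · exact Or.inr (Set.mem_inv.mp h)
  have hne : {n : ℕ | ∃ l : List G, l.length = n ∧ (∀ x ∈ l, x ∈ X ∨ x⁻¹ ∈ X) ∧ l.prod = g}.Nonempty :=
    ⟨l.length, l, rfl, hl', hp⟩
  obtain ⟨l', h1, h2, h3⟩ := Nat.sInf_mem hne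
  exact ⟨l', h1, h2, h3⟩

lemma wordLength_one : wordLength X (1 : G) = 0 :=
  Nat.le_zero.mp (wordLength_le_of_witness X (l := []) (by simp) rfl)

lemma wordLength_mul_le (hgen : Subgroup.closure X = ⊤) (a b : G) :
    wordLength X (a * b) ≤ wordLength X a + wordLength X b := by
  obtain ⟨la, ha1, ha2, ha3⟩ := exists_witness X hgen a
  obtain ⟨lb, hb1, hb2, hb3⟩ := exists_witness X hgen b
  have := wordLength_le_of_witness X (g := a * b) (l := la ++ lb)
    (by intro x hx; rcases List.mem_append.mp hx with h | h; exacts [ha2 x h, hb2 x h])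
    (by rw [List.prod_append, ha3, hb3])
  simpa [ha1, hb1] using this

lemma wordLength_inv_le (hgen : Subgroup.closure X = ⊤) (g : G) :
    wordLength X g⁻¹ ≤ wordLength X g := by
  obtain ⟨l, h1, h2, h3⟩ := exists_witness X hgen g
  have := wordLength_le_of_witness X (g := g⁻¹) (l := (l.map fun x => x⁻¹).reverse)
    (by
      intro x hx
      simp only [List.mem_reverse, List.mem_map] at hx
      obtain ⟨y, hy, rfl⟩ := hx
      rcases h2 y hy with h | h
      · exact Or.inr (by simpa using h)
      · exact Or.inl h)
    (by rw [← h3, List.prod_inv_reverse])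
  simpa [h1] using this

lemma wordLength_inv (hgen : Subgroup.closure X = ⊤) (g : G) :
    wordLength X g⁻¹ = wordLength X g :=
  le_antisymm (wordLength_inv_le X hgen g)
    (by simpa using wordLength_inv_le X hgen g⁻¹)

lemma ball_finite (hX : X.Finite) (hgen : Subgroup.closure X = ⊤) (N : ℕ) :
    {h : G | wordLength X h ≤ N}.Finite := by
  have hY : (X ∪ X⁻¹).Finite := hX.union hX.inv
  haveI := hY.to_subtype
  have hL : {l : List ↥(X ∪ X⁻¹) | l.length ≤ N}.Finite := List.finite_length_le _ N
  apply Set.Finite.subset (hL.image fun l => (l.map Subtype.val).prod)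
  intro h hh
  obtain ⟨l, h1, h2, h3⟩ := exists_witness X hgen h
  have hmem : ∀ x ∈ l, x ∈ X ∪ X⁻¹ := by
    intro x hx
    rcases h2 x hx with h | h
    · exact Or.inl h
    · exact Or.inr (Set.mem_inv.mpr h)
  refine ⟨l.attach.map fun x => ⟨x.1, hmem x.1 x.2⟩, ?_, ?_⟩
  · simpa [h1] using hh
  · simp only [List.map_map]
    rw [show ((fun x : ↥(X ∪ X⁻¹) => x.1) ∘ fun x : {y // y ∈ l} => (⟨x.1, hmem x.1 x.2⟩ : ↥(X ∪ X⁻¹))) = fun x : {y // y ∈ l} => x.1 from rfl]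
    rw [List.attach_map_subtype_val l, h3]

lemma pow_unbounded (hX : X.Finite) (hgen : Subgroup.closure X = ⊤) {g : G}
    (hg : ¬ IsOfFinOrder g) (B : ℕ) :
    ∃ M : ℕ, ∀ i, M ≤ i → B < wordLength X (g ^ i) := by
  have hinj : Function.Injective fun n : ℕ => g ^ n :=
    injective_pow_iff_not_isOfFinOrder.mpr hg
  have hfin : {i : ℕ | wordLength X (g ^ i) ≤ B}.Finite := by
    have := (ball_finite X hX hgen B).preimage hinj.injOn
    exact this
  obtain ⟨M, hM⟩ := hfin.bddAbove
  refine ⟨M + 1, fun i hi => ?_⟩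
  by_contra hcon
  push_neg at hcon
  have := hM (Set.mem_setOf.mpr hcon)
  omega

end aux

/-- The word metric on `G` associated to the generating set `X`. -/
noncomputable def wordDist {G : Type*} [Group G] (X : Set G) (g h : G) : ℕ :=
  wordLength X (g⁻¹ * h)

/-- `inCone X g h α c` : the forward orbit `g^∞ = {gⁿ : n ∈ ℕ}` is contained in the
`(α,c)`-cone around the forward orbit `h^∞`, i.e. each `gⁿ` lies in some ball
`B(hᵐ, α·d(1,hᵐ) + c)`. -/
def inCone {G : Type*} [Group G] (X : Set G) (g h : G) (α : ℝ) (c : ℕ) : Prop :=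
  ∀ n : ℕ, ∃ m : ℕ,
    (wordDist X (h ^ m) (g ^ n) : ℝ) ≤ α * (wordDist X 1 (h ^ m) : ℝ) + (c : ℝ)

/-- `sDist X g h = inf {α ∈ ℝ : ∃ c ∈ ℕ, g^∞ ∈ α·h^∞ + c and h^∞ ∈ α·g^∞ + c}`,
the quantity `s(g^∞, h^∞)` of Krön–Lehnert–Seifter–Teufl. -/
noncomputable def sDist {G : Type*} [Group G] (X : Set G) (g h : G) : ℝ :=
  sInf {α : ℝ | ∃ c : ℕ, inCone X g h α c ∧ inCone X h g α c}

/-- For any finitely generated group and any element `g` of infinite order,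
`s(g^∞, g^{-∞}) ≥ 1/2`, hence `t(g^∞, g^{-∞}) = √s ≥ 1/√2`. -/
theorem sDist_self_inv_ge_half {G : Type*} [Group G] (X : Set G) (hX : X.Finite)
    (hgen : Subgroup.closure X = ⊤) (g : G) (hg : ¬ IsOfFinOrder g) :
    (1 / 2 : ℝ) ≤ sDist X g g⁻¹ ∧
    1 / Real.sqrt 2 ≤ Real.sqrt (sDist X g g⁻¹) := by
  have hd1 : ∀ m n : ℕ, wordDist X ((g⁻¹) ^ m) (g ^ n) = wordLength X (g ^ (m + n)) := by
    intro m n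
    unfold wordDist
    rw [inv_pow, inv_inv, ← pow_add]
  have hd2 : ∀ m : ℕ, wordDist X 1 ((g⁻¹) ^ m) = wordLength X (g ^ m) := by
    intro m
    unfold wordDist
    rw [inv_one, one_mul, inv_pow, wordLength_inv X hgen]
  have hd3 : ∀ m n : ℕ, wordDist X (g ^ m) ((g⁻¹) ^ n) = wordLength X (g ^ (n + m)) := by
    intro m n
    unfold wordDist
    rw [inv_pow, ← mul_inv_rev, ← pow_add, wordLength_inv X hgen]
  have hd4 : ∀ m : ℕ, wordDist X 1 (g ^ m) = wordLength X (g ^ m) := by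
    intro m
    unfold wordDist
    rw [inv_one, one_mul]
  -- double length subadditivity
  have hdouble : ∀ n : ℕ, wordLength X (g ^ (n + n)) ≤ wordLength X (g ^ n) + wordLength X (g ^ n) := by
    intro n
    rw [pow_add]
    exact wordLength_mul_le X hgen _ _
  -- the defining set is nonempty: α = 2, c = 0 works
  have hmem : (2 : ℝ) ∈ {α : ℝ | ∃ c : ℕ, inCone X g g⁻¹ α c ∧ inCone X g⁻¹ g α c} := by
    refine ⟨0, fun n => ⟨n, ?_⟩, fun n => ⟨n, ?_⟩⟩
    · rw [hd1 n n, hd2 n]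
      have := hdouble n
      push_cast
      have h' : (wordLength X (g ^ (n + n)) : ℝ) ≤ wordLength X (g ^ n) + wordLength X (g ^ n) := by
        exact_mod_cast this
      linarith
    · rw [hd3 n n, hd4 n]
      have := hdouble n
      push_cast
      have h' : (wordLength X (g ^ (n + n)) : ℝ) ≤ wordLength X (g ^ n) + wordLength X (g ^ n) := by
        exact_mod_cast this
      linarith
  -- lower bound on every element of the set
  have hlow : ∀ α ∈ {α : ℝ | ∃ c : ℕ, inCone X g g⁻¹ α c ∧ inCone X g⁻¹ g α c},
      (1 / 2 : ℝ) ≤ α := by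
    rintro α ⟨c, hc1, -⟩
    by_contra hlt
    push_neg at hlt
    set α' : ℝ := max α 0 with hα'def
    have hα'0 : (0 : ℝ) ≤ α' := le_max_right _ _
    have hα' : α' < 1 / 2 := max_lt hlt (by norm_num)
    have h1mα : (0 : ℝ) < 1 - α' := by linarith
    have hcone' : ∀ n : ℕ, ∃ m : ℕ,
        (wordLength X (g ^ (m + n)) : ℝ) ≤ α' * wordLength X (g ^ m) + c := by
      intro n
      obtain ⟨m, hm⟩ := hc1 n
      rw [hd1 m n, hd2 m] at hm
      refine ⟨m, hm.trans ?_⟩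
      have := mul_le_mul_of_nonneg_right (le_max_left α 0)
        (Nat.cast_nonneg (wordLength X (g ^ m)) : (0 : ℝ) ≤ _)
      linarith
    set β : ℝ := α' / (1 - α') with hβdef
    have hβ0 : (0 : ℝ) ≤ β := div_nonneg hα'0 h1mα.le
    have hβ1 : β < 1 := (div_lt_one h1mα).mpr (by linarith)
    have h1mβ : (0 : ℝ) < 1 - β := by linarith
    have key : ∀ N : ℕ, (c : ℝ) < wordLength X (g ^ N) →
        ∃ m : ℕ, 1 ≤ m ∧
          (wordLength X (g ^ (N + m)) : ℝ) ≤ β * wordLength X (g ^ N) + c / (1 - α') := by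
      intro N hN
      obtain ⟨m, hm⟩ := hcone' N
      rcases Nat.eq_zero_or_pos m with rfl | hm1
      · exfalso
        rw [zero_add, pow_zero, wordLength_one] at hm
        push_cast at hm
        linarith
      · refine ⟨m, hm1, ?_⟩
        have htri : (wordLength X (g ^ m) : ℝ) ≤
            wordLength X (g ^ (m + N)) + wordLength X (g ^ N) := by
          have h' : wordLength X (g ^ m) ≤
              wordLength X (g ^ (m + N)) + wordLength X (g ^ N) := by
            have h := wordLength_mul_le X hgen (g ^ (m + N)) ((g ^ N)⁻¹)
            rw [wordLength_inv X hgen] at h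
            have heq : g ^ (m + N) * (g ^ N)⁻¹ = g ^ m := by
              rw [pow_add]
              group
            rwa [heq] at h
          exact_mod_cast h'
        rw [add_comm N m]
        have hmul := mul_le_mul_of_nonneg_left htri hα'0
        have hdiv : (wordLength X (g ^ (m + N)) : ℝ) ≤
            (α' * wordLength X (g ^ N) + c) / (1 - α') := by
          rw [le_div_iff₀ h1mα]
          nlinarith
        have heq2 : (α' * (wordLength X (g ^ N) : ℝ) + c) / (1 - α') =
            β * wordLength X (g ^ N) + c / (1 - α') := by
          rw [hβdef]
          ring
        linarith [hdiv, heq2.le]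
    obtain ⟨n₀, hn₀⟩ := pow_unbounded X hX hgen hg c
    set D : ℝ := max (wordLength X (g ^ n₀) : ℝ) ((c : ℝ) / ((1 - α') * (1 - β))) with hDdef
    have hcD : (c : ℝ) / (1 - α') ≤ (1 - β) * D := by
      have h1 := mul_le_mul_of_nonneg_left
        (le_max_right (wordLength X (g ^ n₀) : ℝ) ((c : ℝ) / ((1 - α') * (1 - β)))) h1mβ.le
      have h2 : (1 - β) * ((c : ℝ) / ((1 - α') * (1 - β))) = (c : ℝ) / (1 - α') := by
        field_simp
      rw [h2] at h1
      exact h1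
    have claim : ∀ k : ℕ, ∃ N : ℕ, n₀ + k ≤ N ∧ (wordLength X (g ^ N) : ℝ) ≤ D := by
      intro k
      induction k with
      | zero => exact ⟨n₀, by omega, le_max_left _ _⟩
      | succ k ih =>
        obtain ⟨N, hN1, hN2⟩ := ih
        have hcN : (c : ℝ) < wordLength X (g ^ N) := by
          exact_mod_cast hn₀ N (by omega)
        obtain ⟨m, hm1, hm2⟩ := key N hcN
        refine ⟨N + m, by omega, ?_⟩
        have := mul_le_mul_of_nonneg_left hN2 hβ0
        linarith
    obtain ⟨M, hM⟩ := pow_unbounded X hX hgen hg (Nat.ceil D)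
    obtain ⟨N, hN1, hN2⟩ := claim M
    have h1 : Nat.ceil D < wordLength X (g ^ N) := hM N (by omega)
    have h2 : wordLength X (g ^ N) ≤ Nat.ceil D := by
      have := hN2.trans (Nat.le_ceil D)
      exact_mod_cast this
    omega
  have hfirst : (1 / 2 : ℝ) ≤ sDist X g g⁻¹ := le_csInf ⟨2, hmem⟩ hlow
  refine ⟨hfirst, ?_⟩
  have hs : Real.sqrt (1 / 2) ≤ Real.sqrt (sDist X g g⁻¹) := Real.sqrt_le_sqrt hfirst
  have heq : Real.sqrt (1 / 2 : ℝ) = 1 / Real.sqrt 2 := by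
    rw [one_div, one_div, ← Real.sqrt_inv]
  linarith
end

section
/- Let p ≥ 2 and let G_p = ⟨a,t | t^{-1}a^{-1}t a t^{-1} a t = a^p⟩. Define elements g_k ∈ G_p by g₀ = a and g_{k+1} = t^{-1} g_k^{-1} t · a · t^{-1} g_k t. Then g_k = a^{T(k)} in G_p, where T(0)=1 and T(k+1) = p^{T(k)}. -/
/-- Generators of the Baumslag–Gersten-type group `G_p`. -/
inductive GGen | a | t
  deriving DecidableEq

/-- The single relator `t⁻¹ a⁻¹ t a t⁻¹ a t (a^p)⁻¹` of
`G_p = ⟨a,t ∣ t⁻¹a⁻¹t a t⁻¹ a t = a^p⟩`. -/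
def gRels (p : ℕ) : Set (FreeGroup GGen) :=
  {(FreeGroup.of GGen.t)⁻¹ * (FreeGroup.of GGen.a)⁻¹ * FreeGroup.of GGen.t *
    FreeGroup.of GGen.a * (FreeGroup.of GGen.t)⁻¹ * FreeGroup.of GGen.a *
    FreeGroup.of GGen.t * (FreeGroup.of GGen.a ^ p)⁻¹}

/-- `a` in `G_p`. -/
def ga (p : ℕ) : PresentedGroup (gRels p) := PresentedGroup.of GGen.a
/-- `t` in `G_p`. -/
def gt' (p : ℕ) : PresentedGroup (gRels p) := PresentedGroup.of GGen.t

/-- The elements `g_k ∈ G_p`: `g₀ = a` and `g_{k+1} = t⁻¹ g_k⁻¹ t · a · t⁻¹ g_k t`. -/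
def gElt (p : ℕ) : ℕ → PresentedGroup (gRels p)
  | 0 => ga p
  | k + 1 => (gt' p)⁻¹ * (gElt p k)⁻¹ * gt' p * ga p * (gt' p)⁻¹ * gElt p k * gt' p

/-- The tower of `p`-th powers: `tow p 0 = 1`, `tow p (k+1) = p ^ tow p k`. -/
def tow (p : ℕ) : ℕ → ℕ
  | 0 => 1
  | k + 1 => p ^ tow p k

lemma gRel_eq (p : ℕ) :
    (gt' p)⁻¹ * (ga p)⁻¹ * gt' p * ga p * (gt' p)⁻¹ * ga p * gt' p = ga p ^ p := by
  have h : PresentedGroup.mk (gRels p)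
      ((FreeGroup.of GGen.t)⁻¹ * (FreeGroup.of GGen.a)⁻¹ * FreeGroup.of GGen.t *
        FreeGroup.of GGen.a * (FreeGroup.of GGen.t)⁻¹ * FreeGroup.of GGen.a *
        FreeGroup.of GGen.t * (FreeGroup.of GGen.a ^ p)⁻¹) = 1 := by
    have : ((FreeGroup.of GGen.t)⁻¹ * (FreeGroup.of GGen.a)⁻¹ * FreeGroup.of GGen.t *
        FreeGroup.of GGen.a * (FreeGroup.of GGen.t)⁻¹ * FreeGroup.of GGen.a *
        FreeGroup.of GGen.t * (FreeGroup.of GGen.a ^ p)⁻¹) ∈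
        Subgroup.normalClosure (gRels p) :=
      Subgroup.subset_normalClosure rfl
    exact (QuotientGroup.eq_one_iff _).mpr this
  simp only [map_mul, map_inv, map_pow] at h
  have := mul_eq_one_iff_eq_inv.mp h
  simpa [ga, gt', PresentedGroup.of, mul_assoc] using this

lemma conj_pown {G : Type*} [Group G] (g a : G) (n : ℕ) :
    g⁻¹ * a ^ n * g = (g⁻¹ * a * g) ^ n := by
  induction n with
  | zero => simp
  | succ n ih => rw [pow_succ, pow_succ, ← ih]; group

/-- With `x = t⁻¹ a t`, `x⁻¹^m * a * x^m = a^(p^m)`. -/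
lemma conj_pow_lemma (p : ℕ) (m : ℕ) :
    ((gt' p)⁻¹ * ga p * gt' p)⁻¹ ^ m * ga p * ((gt' p)⁻¹ * ga p * gt' p) ^ m
      = ga p ^ p ^ m := by
  induction m with
  | zero => simp
  | succ m ih =>
    set x := (gt' p)⁻¹ * ga p * gt' p with hx
    have hxa : x⁻¹ * ga p * x = ga p ^ p := by
      have := gRel_eq p
      rw [hx]; group; group at this ⊢
      convert this using 2
    calc x⁻¹ ^ (m + 1) * ga p * x ^ (m + 1)
        = x⁻¹ * (x⁻¹ ^ m * ga p * x ^ m) * x := by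
          rw [pow_succ, pow_succ']
          group
      _ = x⁻¹ * ga p ^ p ^ m * x := by rw [ih]
      _ = (x⁻¹ * ga p * x) ^ p ^ m := conj_pown _ _ _
      _ = ga p ^ p ^ (m + 1) := by rw [hxa, ← pow_mul, pow_succ']

theorem gElt_eq_a_pow_tower (p : ℕ) (hp : 2 ≤ p) (k : ℕ) :
    gElt p k = ga p ^ tow p k := by
  induction k with
  | zero => simp [gElt, tow]
  | succ k ih =>
    rw [gElt, ih, tow]
    set x := (gt' p)⁻¹ * ga p * gt' p with hx
    have ht : (gt' p)⁻¹ * ga p ^ tow p k * gt' p = x ^ tow p k := by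
      rw [hx]; exact conj_pown _ _ _
    have ht' : (gt' p)⁻¹ * (ga p ^ tow p k)⁻¹ * gt' p = x⁻¹ ^ tow p k := by
      rw [inv_pow, ← ht]; group
    calc (gt' p)⁻¹ * (ga p ^ tow p k)⁻¹ * gt' p * ga p * (gt' p)⁻¹ * ga p ^ tow p k * gt' p
        = ((gt' p)⁻¹ * (ga p ^ tow p k)⁻¹ * gt' p) * ga p *
            ((gt' p)⁻¹ * ga p ^ tow p k * gt' p) := by group
      _ = x⁻¹ ^ tow p k * ga p * x ^ tow p k := by rw [ht, ht']
      _ = ga p ^ p ^ tow p k := conj_pow_lemma p (tow p k)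
end
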